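/- The Hilbert-space adjoint of T is given explicitly by T*(y₀,y₁) = (−y₀ − ∫_{−d}^0 y₁(s) ds, ξ ↦ −∫_{−d}^ξ y₁(s) ds) for every (y₀,y₁) ∈ X, and the range of T* equals the set of all (x₀,x₁) ∈ X such that x₁ has an absolutely continuous representative g with a.e. derivative g′ ∈ L²([-d,0];ℝⁿ) and g(−d) = 0. (This set is the domain D(Ã*) of the adjoint of the delay operator, and coincides with the range of B^{1/2} where B = T*T.) -/

import Mathlib

/-!
Pairing `x` with `T y`, the only non-explicit term is `∫ ⟪x₁ ξ, ∫_ξ^0 y₁⟫ dξ`; exchanging the order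
of integration over the triangle `-d ≤ ξ < s ≤ 0` turns it into `∫ ⟪∫_{-d}^s x₁, y₁ s⟫ ds`, which
exhibits `T* x` as the explicit pair. Its second component is the primitive of `-x₁` vanishing
at `-d`; conversely, if `x₁ = g` with `g(-d) = 0` and `g' ∈ L²`, then `x = T*(g 0 - x₀, -g')`.
-/

open MeasureTheory Set
open scoped RealInnerProductSpace ENNReal

noncomputable section

/-- The "present" space `ℝⁿ`. -/
abbrev En (n : ℕ) := EuclideanSpace ℝ (Fin n)

/-- Lebesgue measure restricted to `[-d, 0]`. -/
def muD (d : ℝ) : Measure ℝ := volume.restrict (Icc (-d) 0)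

/-- The Hilbert space `X = ℝⁿ × L²([-d,0];ℝⁿ)` with the Hilbertian product norm. -/
abbrev Xsp (d : ℝ) (n : ℕ) := WithLp 2 (En n × Lp (En n) 2 (muD d))

/-- First (present) component of an element of `X`. -/
def fstX {d : ℝ} {n : ℕ} (x : Xsp d n) : En n := (WithLp.equiv 2 _ x).1

/-- Second (past) component of an element of `X`. -/
def sndX {d : ℝ} {n : ℕ} (x : Xsp d n) : Lp (En n) 2 (muD d) := (WithLp.equiv 2 _ x).2

/-- `T` acts by `T(y₀,y₁) = (-y₀, ξ ↦ -y₀ - ∫_ξ^0 y₁(s) ds)`. -/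
def SpecT (d : ℝ) (n : ℕ) (T : Xsp d n →L[ℝ] Xsp d n) : Prop :=
  ∀ y : Xsp d n,
    fstX (T y) = -fstX y ∧
    (sndX (T y) : ℝ → En n) =ᵐ[muD d]
      fun ξ => -fstX y - ∫ s in ξ..0, (sndX y : ℝ → En n) s

/-- `(g, g')` is a `W^{1,2}` representative pair on `[-d,0]`: `g` is absolutely
continuous with a.e. derivative `g' ∈ L²([-d,0];ℝⁿ)`. -/
def IsW12 (d : ℝ) {n : ℕ} (g g' : ℝ → En n) : Prop :=
  MemLp g' 2 (muD d) ∧ ∀ ξ ∈ Icc (-d) 0, g ξ = g (-d) + ∫ s in (-d)..ξ, g' s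

/-- The domain `D(Ã)` of the delay operator. -/
def domA (d : ℝ) (n : ℕ) : Set (Xsp d n) :=
  {x | ∃ g g' : ℝ → En n, IsW12 d g g' ∧ g 0 = fstX x ∧ (sndX x : ℝ → En n) =ᵐ[muD d] g}

section TriangleFubini

variable {E : Type*} [NormedAddCommGroup E] [InnerProductSpace ℝ E] {μ : Measure ℝ} {f g : ℝ → E}

lemma integrable_ite_lt_inner [SFinite μ] (hf : Integrable f μ) (hg : Integrable g μ) :
    Integrable (fun q : ℝ × ℝ => if q.1 < q.2 then ⟪f q.1, g q.2⟫ else 0) (μ.prod μ) := by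
  refine (hf.norm.mul_prod hg.norm).mono' ?_ (.of_forall fun q => ?_)
  · exact (hf.aestronglyMeasurable.comp_fst.inner hg.aestronglyMeasurable.comp_snd).indicator
      (measurableSet_lt measurable_fst measurable_snd)
  · split_ifs
    · exact norm_inner_le_norm _ _
    · simp only [norm_zero]; positivity

variable [CompleteSpace E]

lemma inner_setIntegral_Ioi_eq_integral_ite (hg : Integrable g μ) (x : E) (ξ : ℝ) :
    ⟪x, ∫ s in Ioi ξ, g s ∂μ⟫ = ∫ s, if ξ < s then ⟪x, g s⟫ else 0 ∂μ := by
  rw [← integral_inner hg.integrableOn, ← integral_indicator measurableSet_Ioi]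
  rfl

lemma inner_setIntegral_Iio_eq_integral_ite (hf : Integrable f μ) (y : E) (s : ℝ) :
    ⟪∫ ξ in Iio s, f ξ ∂μ, y⟫ = ∫ ξ, if ξ < s then ⟪f ξ, y⟫ else 0 ∂μ := by
  rw [real_inner_comm, ← integral_inner hf.integrableOn, ← integral_indicator measurableSet_Iio]
  congr 1 with ξ
  simp only [indicator_apply, mem_Iio, real_inner_comm]

lemma integrable_inner_setIntegral_Ioi [SFinite μ] (hf : Integrable f μ) (hg : Integrable g μ) :
    Integrable (fun ξ => ⟪f ξ, ∫ s in Ioi ξ, g s ∂μ⟫) μ := by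
  simpa only [inner_setIntegral_Ioi_eq_integral_ite hg]
    using (integrable_ite_lt_inner hf hg).integral_prod_left

lemma integral_inner_setIntegral_Ioi [SFinite μ] (hf : Integrable f μ) (hg : Integrable g μ) :
    ∫ ξ, ⟪f ξ, ∫ s in Ioi ξ, g s ∂μ⟫ ∂μ = ∫ s, ⟪∫ ξ in Iio s, f ξ ∂μ, g s⟫ ∂μ := by
  simp only [inner_setIntegral_Ioi_eq_integral_ite hg, inner_setIntegral_Iio_eq_integral_ite hf]
  exact integral_integral_swap (integrable_ite_lt_inner hf hg)

end TriangleFubini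

section MuD

variable {d : ℝ} {E : Type*} [NormedAddCommGroup E] [NormedSpace ℝ E]

instance (d : ℝ) : IsFiniteMeasure (muD d) := by
  unfold muD; infer_instance

lemma ae_mem_Icc_muD (d : ℝ) : ∀ᵐ s ∂muD d, s ∈ Icc (-d) 0 :=
  ae_restrict_mem measurableSet_Icc

lemma integral_muD (hd : 0 ≤ d) (f : ℝ → E) : ∫ s, f s ∂muD d = ∫ s in (-d)..0, f s := by
  rw [intervalIntegral.integral_of_le (by linarith), muD, integral_Icc_eq_integral_Ioc]

lemma setIntegral_Ioi_muD {ξ : ℝ} (hξ : ξ ∈ Icc (-d) 0) (f : ℝ → E) :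
    ∫ s in Ioi ξ, f s ∂muD d = ∫ s in ξ..0, f s := by
  rw [intervalIntegral.integral_of_le hξ.2, muD, Measure.restrict_restrict measurableSet_Ioi,
    show Ioi ξ ∩ Icc (-d) 0 = Ioc ξ 0 by ext; grind]

lemma setIntegral_Iio_muD {s : ℝ} (hs : s ∈ Icc (-d) 0) (f : ℝ → E) :
    ∫ ξ in Iio s, f ξ ∂muD d = ∫ ξ in (-d)..s, f ξ := by
  rw [intervalIntegral.integral_of_le hs.1, muD, Measure.restrict_restrict measurableSet_Iio,
    show Iio s ∩ Icc (-d) 0 = Ico (-d) s by ext; grind, integral_Ico_eq_integral_Ioc]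

lemma intervalIntegral_congr_muD {f g : ℝ → E} (hfg : f =ᵐ[muD d] g) {a b : ℝ}
    (ha : a ∈ Icc (-d) 0) (hb : b ∈ Icc (-d) 0) :
    ∫ s in a..b, f s = ∫ s in a..b, g s := by
  refine intervalIntegral.integral_congr_ae ?_
  filter_upwards [(ae_restrict_iff' measurableSet_Icc).mp hfg] with s hs hs_mem
  exact hs (uIcc_subset_Icc ha hb (uIoc_subset_uIcc hs_mem))

lemma memLp_primitive_muD {f : ℝ → E} (hf : Integrable f (muD d)) :
    MemLp (fun ξ => ∫ s in (-d)..ξ, f s) 2 (muD d) := by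
  have hcont : ContinuousOn (fun ξ => ∫ s in (-d)..ξ, f s) (Icc (-d) 0) :=
    (intervalIntegral.continuousOn_primitive hf).congr fun ξ hξ =>
      intervalIntegral.integral_of_le hξ.1
  obtain ⟨C, hC⟩ := isCompact_Icc.exists_bound_of_continuousOn hcont
  exact .of_bound (hcont.aestronglyMeasurable measurableSet_Icc) C
    ((ae_restrict_iff' measurableSet_Icc).mpr (.of_forall hC))

end MuD

section Xsp

variable {d : ℝ} {n : ℕ}

def mkX (a : En n) (b : Lp (En n) 2 (muD d)) : Xsp d n := WithLp.toLp 2 (a, b)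

@[simp] lemma fstX_mkX (a : En n) (b : Lp (En n) 2 (muD d)) : fstX (mkX a b) = a := rfl

@[simp] lemma sndX_mkX (a : En n) (b : Lp (En n) 2 (muD d)) : sndX (mkX a b) = b := rfl

lemma Xsp.ext {x y : Xsp d n} (h₀ : fstX x = fstX y) (h₁ : sndX x = sndX y) : x = y :=
  WithLp.ofLp_injective 2 (Prod.ext h₀ h₁)

lemma inner_Xsp (x y : Xsp d n) :
    ⟪x, y⟫ = ⟪fstX x, fstX y⟫ + ∫ s, ⟪sndX x s, sndX y s⟫ ∂muD d := by
  rw [WithLp.prod_inner_apply, L2.inner_def]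
  rfl

lemma integrable_sndX (x : Xsp d n) : Integrable (sndX x) (muD d) :=
  (Lp.memLp _).integrable one_le_two

def delayInvAdjoint (x : Xsp d n) : Xsp d n :=
  mkX (-fstX x - ∫ s in (-d)..0, sndX x s)
    ((memLp_primitive_muD (integrable_sndX x)).neg.toLp fun ξ => -∫ s in (-d)..ξ, sndX x s)

lemma fstX_delayInvAdjoint (x : Xsp d n) :
    fstX (delayInvAdjoint x) = -fstX x - ∫ s in (-d)..0, sndX x s := rfl

lemma sndX_delayInvAdjoint (x : Xsp d n) :
    (sndX (delayInvAdjoint x) : ℝ → En n) =ᵐ[muD d] fun ξ => -∫ s in (-d)..ξ, sndX x s :=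
  (memLp_primitive_muD (integrable_sndX x)).neg.coeFn_toLp

lemma inner_delayInvAdjoint (hd : 0 ≤ d) {T : Xsp d n →L[ℝ] Xsp d n} (hT : SpecT d n T)
    (x y : Xsp d n) : ⟪delayInvAdjoint x, y⟫ = ⟪x, T y⟫ := by
  have hx := integrable_sndX x
  have hy := integrable_sndX y
  have hTy : ∫ ξ, ⟪sndX x ξ, sndX (T y) ξ⟫ ∂muD d
      = ∫ ξ, -(⟪fstX y, sndX x ξ⟫ + ⟪sndX x ξ, ∫ s in Ioi ξ, sndX y s ∂muD d⟫) ∂muD d := by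
    refine integral_congr_ae ?_
    filter_upwards [(hT y).2, ae_mem_Icc_muD d] with ξ hTξ hξ
    rw [hTξ, setIntegral_Ioi_muD hξ, inner_sub_right, inner_neg_right, real_inner_comm, neg_add']
  have hAdj : ∫ s, ⟪sndX (delayInvAdjoint x) s, sndX y s⟫ ∂muD d
      = ∫ s, -⟪∫ ξ in Iio s, sndX x ξ ∂muD d, sndX y s⟫ ∂muD d := by
    refine integral_congr_ae ?_
    filter_upwards [sndX_delayInvAdjoint x, ae_mem_Icc_muD d] with s hAs hs
    rw [hAs, setIntegral_Iio_muD hs, inner_neg_left]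
  rw [inner_Xsp, inner_Xsp, hTy, hAdj, integral_neg, integral_neg, integral_add (hx.const_inner _)
    (integrable_inner_setIntegral_Ioi hx hy), integral_inner hx,
    integral_inner_setIntegral_Ioi hx hy, fstX_delayInvAdjoint, (hT y).1, ← integral_muD hd]
  simp only [real_inner_comm (fstX y), inner_sub_right, inner_neg_right]
  ring

lemma range_delayInvAdjoint (hd : 0 ≤ d) :
    range (delayInvAdjoint : Xsp d n → Xsp d n) =
      {x | ∃ g g' : ℝ → En n, IsW12 d g g' ∧ g (-d) = 0 ∧ (sndX x : ℝ → En n) =ᵐ[muD d] g} := by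
  ext x
  constructor
  · rintro ⟨y, rfl⟩
    refine ⟨fun ξ => -∫ s in (-d)..ξ, sndX y s, fun s => -sndX y s,
      ⟨(Lp.memLp _).neg, fun ξ _ => ?_⟩, ?_, sndX_delayInvAdjoint y⟩
    · simp only [intervalIntegral.integral_same, neg_zero, zero_add, intervalIntegral.integral_neg]
    · simp only [intervalIntegral.integral_same, neg_zero]
  · rintro ⟨g, g', ⟨hg', hg⟩, hg_left, hxg⟩
    set w : Lp (En n) 2 (muD d) := hg'.neg.toLp (-g')
    have hw_ae : (w : ℝ → En n) =ᵐ[muD d] -g' := hg'.neg.coeFn_toLp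
    have hw : ∀ ξ ∈ Icc (-d) 0, -∫ s in (-d)..ξ, w s = g ξ := fun ξ hξ => by
      rw [intervalIntegral_congr_muD hw_ae (left_mem_Icc.2 (by linarith)) hξ, Pi.neg_def,
        intervalIntegral.integral_neg, neg_neg, hg ξ hξ, hg_left, zero_add]
    refine ⟨mkX (g 0 - fstX x) w, Xsp.ext ?_ (Lp.ext ?_)⟩
    · rw [fstX_delayInvAdjoint, fstX_mkX, sndX_mkX,
        neg_eq_iff_eq_neg.mp (hw 0 (right_mem_Icc.2 (by linarith)))]
      abel
    · filter_upwards [sndX_delayInvAdjoint (mkX (g 0 - fstX x) w), hxg, ae_mem_Icc_muD d]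
        with ξ hξ hxξ hξ_mem
      rw [hξ, hxξ, sndX_mkX, hw ξ hξ_mem]

end Xsp

/-- **Explicit formula for `T*` and its range.**
The Hilbert-space adjoint of `T` is
`T*(y₀,y₁) = (-y₀ - ∫_{-d}^0 y₁(s) ds, ξ ↦ -∫_{-d}^ξ y₁(s) ds)`, and the range of `T*`
is the set of `(x₀,x₁) ∈ X` such that `x₁` has an absolutely continuous representative
`g` with a.e. derivative `g' ∈ L²` and `g(-d) = 0` (this set is `D(Ã*) = Range B^{1/2}`). -/
theorem adjoint_of_delay_inverse (d : ℝ) (hd : 0 < d) (n : ℕ)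
    (T : Xsp d n →L[ℝ] Xsp d n) (hT : SpecT d n T)
    (Tstar : Xsp d n →L[ℝ] Xsp d n)
    (hTstar : ∀ x y : Xsp d n, ⟪Tstar x, y⟫ = ⟪x, T y⟫) :
    (∀ y : Xsp d n,
      fstX (Tstar y) = -fstX y - ∫ s in (-d)..0, (sndX y : ℝ → En n) s ∧
      (sndX (Tstar y) : ℝ → En n) =ᵐ[muD d]
        fun ξ => -∫ s in (-d)..ξ, (sndX y : ℝ → En n) s) ∧
    Set.range Tstar =
      {x : Xsp d n | ∃ g g' : ℝ → En n, IsW12 d g g' ∧ g (-d) = 0 ∧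
        (sndX x : ℝ → En n) =ᵐ[muD d] g} := by
  have hTstar_eq : ⇑Tstar = delayInvAdjoint := funext fun x =>
    ext_inner_right ℝ fun y => by rw [hTstar, inner_delayInvAdjoint hd.le hT]
  rw [hTstar_eq]
  exact ⟨fun y => ⟨fstX_delayInvAdjoint y, sndX_delayInvAdjoint y⟩, range_delayInvAdjoint hd.le⟩
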